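/- arXiv:1203.3727 — 10 statements merged into one kernel-verified Lean document; each statement's English description precedes it below -/
import Mathlib

section
/- Let V be a finite set, r ≥ 2, and let a 'constraint' be an r-element subset S of V together with a 0/1 evaluation c on rankings (linear orders) of S. A 'conflict' is a subset C ⊆ V such that no linear order of C satisfies all constraints on r-subsets of C. Suppose {C₁, …, C_m} is a family of conflicts whose pairwise intersections all equal a single common constraint S (a sunflower with center S), with m > k. Then any set F of at most k constraints whose editing yields a consistent instance must contain S. -/
/-- A ranking `r`-CSP constraint system on vertex set `V`: for each `r`-subset `S`,
`sat S σ` says the ranking `σ` (given by positions in `ℕ`) satisfies the constraint on `S`.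
The evaluation only depends on the relative order of the vertices of `S`. -/
structure RankingCSP (V : Type*) (r : ℕ) where
  sat : Finset V → (V → ℕ) → Prop
  invariant : ∀ S : Finset V, ∀ σ τ : V → ℕ,
    (∀ u ∈ S, ∀ v ∈ S, (σ u < σ v ↔ τ u < τ v)) → (sat S σ ↔ sat S τ)

/-- `C` is a conflict: no ranking of `C` satisfies all constraints on `r`-subsets of `C`. -/
def IsConflict {V : Type*} {r : ℕ} (c : RankingCSP V r) (C : Finset V) : Prop :=
  ¬ ∃ σ : V → ℕ, Set.InjOn σ ↑C ∧ ∀ S ⊆ C, S.card = r → c.sat S σ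

/-!
Each conflict `C i` must contain an edited constraint, since otherwise the consistent ranking
of the edited instance would also rank `C i` consistently for the original one. As there are
more conflicts than edited constraints, two distinct conflicts share an edited `r`-set; it lies
in their intersection `S`, which has exactly `r` elements, so it is `S`.
-/

theorem IsConflict.exists_edited_subset {V : Type*} {r : ℕ} {c c' : RankingCSP V r}
    {C : Finset V} (hC : IsConflict c C) {F : Finset (Finset V)}
    (hagree : ∀ T : Finset V, T ∉ F → c'.sat T = c.sat T) {σ : V → ℕ} (hσ : Set.InjOn σ C)
    (hcons : ∀ T ⊆ C, T.card = r → c'.sat T σ) :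
    ∃ T ∈ F, T ⊆ C ∧ T.card = r := by
  by_contra! hunedited
  refine hC ⟨σ, hσ, fun T hTC hTr => ?_⟩
  have hTF : T ∉ F := fun hTF => hunedited T hTF hTC hTr
  exact hagree T hTF ▸ hcons T hTC hTr

theorem sunflower_center_must_be_edited_general
    {V : Type*} [DecidableEq V] {r k m : ℕ}
    (c : RankingCSP V r) (S : Finset V) (hS : S.card = r)
    (C : Fin m → Finset V)
    (hconf : ∀ i, IsConflict c (C i))
    (hpair : ∀ i j, i ≠ j → C i ∩ C j = S)
    (hm : k < m)
    (F : Finset (Finset V)) (hF : F.card ≤ k)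
    -- `F` is an edition: editing the constraints in `F` yields a consistent instance,
    -- witnessed by the edited system `c'` and the consistent ranking `σ`
    (c' : RankingCSP V r) (hagree : ∀ T : Finset V, T ∉ F → c'.sat T = c.sat T)
    (σ : V → ℕ) (hσ : Function.Injective σ)
    (hcons : ∀ T : Finset V, T.card = r → c'.sat T σ) :
    S ∈ F := by
  choose T hTF hTC hTr using fun i =>
    (hconf i).exists_edited_subset hagree hσ.injOn fun T _ => hcons T
  obtain ⟨i, -, j, -, hij, hTij⟩ :=
    Finset.exists_ne_map_eq_of_card_lt_of_maps_to (s := Finset.univ) (t := F)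
      (by simpa using hF.trans_lt hm) fun i _ => hTF i
  have hTS : T i ⊆ S := hpair i j hij ▸ Finset.subset_inter (hTC i) (hTij ▸ hTC j)
  have hTeq : T i = S := Finset.eq_of_subset_of_card_le hTS (by rw [hTr i, hS])
  exact hTeq ▸ hTF i

/-- Sunflower lemma: if `{C 1, …, C m}` is a family of conflicts pairwise intersecting
exactly in the constraint `S` (the center), with `m > k`, then any set `F` of at most `k`
constraints whose editing yields a consistent instance must contain `S`. -/
theorem sunflower_center_must_be_edited
    {V : Type*} [Fintype V] [DecidableEq V] {r k m : ℕ} (hr : 2 ≤ r)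
    (c : RankingCSP V r) (S : Finset V) (hS : S.card = r)
    (C : Fin m → Finset V)
    (hconf : ∀ i, IsConflict c (C i))
    (hcenter : ∀ i, S ⊆ C i)
    (hpair : ∀ i j, i ≠ j → C i ∩ C j = S)
    (hm : k < m)
    (F : Finset (Finset V)) (hF : F.card ≤ k)
    -- `F` is an edition: editing the constraints in `F` yields a consistent instance,
    -- witnessed by the edited system `c'` and the consistent ranking `σ`
    (c' : RankingCSP V r) (hagree : ∀ T : Finset V, T ∉ F → c'.sat T = c.sat T)
    (σ : V → ℕ) (hσ : Function.Injective σ)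
    (hcons : ∀ T : Finset V, T.card = r → c'.sat T σ) :
    S ∈ F :=
  sunflower_center_must_be_edited_general c S hS C hconf hpair hm F hF c' hagree σ hσ hcons
end

section
/- Let Π be an l_r-simply characterized ranking r-CSP, and let R_σ = (V, c, σ) be an ordered instance with at most p ≥ 1 inconsistent constraints. If |V| > p(l_r − r) + (l_r − r)(k+1) + r, then there exists a simple sunflower {C₁, …, C_m} with m > k; i.e., there exist m > k sets of l_r vertices, each containing a common inconsistent constraint S, pairwise intersecting exactly in S, and each inducing exactly one inconsistent constraint (namely S). -/
namespace Finset

variable {α : Type*} [DecidableEq α]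

theorem exists_card_le_disjoint_forall_not_disjoint (𝒜 : Finset (Finset α)) (S : Finset α)
    (h𝒜 : ∀ A ∈ 𝒜, ¬A ⊆ S) :
    ∃ H : Finset α, H.card ≤ 𝒜.card ∧ Disjoint H S ∧ ∀ A ∈ 𝒜, ¬Disjoint A H := by
  choose f hfA hfS using fun A hA => not_subset.mp (h𝒜 A hA)
  refine ⟨𝒜.attach.image fun A => f A.1 A.2, card_image_le.trans_eq card_attach, ?_, ?_⟩
  · simp only [disjoint_left, mem_image]
    rintro _ ⟨⟨A, hA⟩, -, rfl⟩
    exact hfS A hA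
  · intro A hA
    exact not_disjoint_iff.mpr ⟨f A hA, hfA A hA, mem_image_of_mem _ (mem_attach _ ⟨A, hA⟩)⟩

theorem exists_pairwiseDisjoint_card_eq_disjoint [Fintype α] (m n : ℕ) (F : Finset α)
    (h : m * n + F.card ≤ Fintype.card α) :
    ∃ P : Fin m → Finset α, (∀ i, (P i).card = n) ∧ (∀ i, Disjoint (P i) F) ∧
      Pairwise fun i j => Disjoint (P i) (P j) := by
  have hcard : Fintype.card (Fin m × Fin n) ≤ Fintype.card (Fᶜ : Finset α) := by
    rw [Fintype.card_prod, Fintype.card_fin, Fintype.card_fin, Fintype.card_coe, card_compl]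
    omega
  obtain ⟨e⟩ := Function.Embedding.nonempty_of_card_le hcard
  let g : Fin m × Fin n ↪ α := e.trans (Function.Embedding.subtype _)
  have hg : ∀ x, g x ∉ F := fun x => mem_compl.mp (e x).2
  refine ⟨fun i => univ.map ((Function.Embedding.sectR i (Fin n)).trans g), fun i => ?_,
    fun i => ?_, fun i j hij => ?_⟩
  · simp
  · simp only [disjoint_left, mem_map, mem_univ, true_and]
    rintro _ ⟨b, rfl⟩
    exact hg _
  · simp only [disjoint_left, mem_map, mem_univ, true_and]
    rintro _ ⟨a, rfl⟩ ⟨b, hb⟩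
    exact hij (congrArg Prod.fst (g.injective hb)).symm

theorem existsUnique_subset_mem_of_disjoint {𝒜 : Finset (Finset α)} {S H C : Finset α}
    (hS : S ∈ 𝒜) (hH : ∀ A ∈ 𝒜.erase S, ¬Disjoint A H) (hSC : S ⊆ C) (hCH : Disjoint C H) :
    ∃! T, T ⊆ C ∧ T ∈ 𝒜 :=
  ⟨S, ⟨hSC, hS⟩, fun T ⟨hTC, hT⟩ =>
    by_contra fun hTS => hH T (mem_erase.mpr ⟨hTS, hT⟩) (hCH.mono_left hTC)⟩

end Finset

open Finset

theorem simple_sunflower_exists_general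
    {V : Type*} [Fintype V] [DecidableEq V] {r lr k p : ℕ}
    (hrlr : r ≤ lr)
    (c : RankingCSP V r)
    -- the problem is l_r-simply characterized (stated for the instance at hand)
    (hsimple : ∀ σ : V → ℕ, Function.Injective σ → ∀ C : Finset V, C.card = lr →
      (∃! S : Finset V, S ⊆ C ∧ S.card = r ∧ ¬ c.sat S σ) → IsConflict c C)
    (σ : V → ℕ) (hσ : Function.Injective σ)
    (hple : {S : Finset V | S.card = r ∧ ¬ c.sat S σ}.ncard ≤ p)
    (hex : ∃ S : Finset V, S.card = r ∧ ¬ c.sat S σ)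
    (hV : p * (lr - r) + (lr - r) * (k + 1) + r < Fintype.card V) :
    ∃ (m : ℕ) (C : Fin m → Finset V) (S : Finset V), k < m ∧
      S.card = r ∧ ¬ c.sat S σ ∧
      (∀ i, (C i).card = lr) ∧ (∀ i, S ⊆ C i) ∧
      (∀ i j, i ≠ j → C i ∩ C j = S) ∧
      (∀ i, ∃! T : Finset V, T ⊆ C i ∧ T.card = r ∧ ¬ c.sat T σ) ∧
      (∀ i, IsConflict c (C i)) := by
  classical
  obtain ⟨S, hSr, hSbad⟩ := hex
  set bad := (univ : Finset (Finset V)).filter fun T => T.card = r ∧ ¬c.sat T σ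
  have hSmem : S ∈ bad := by simp [bad, hSr, hSbad]
  have hbad : bad.card ≤ p := by
    rwa [← Set.ncard_coe_finset, coe_filter_univ]
  have hnot_sub : ∀ T ∈ bad.erase S, ¬T ⊆ S := fun T hT hTS =>
    (mem_erase.mp hT).1 <| eq_of_subset_of_card_le hTS (by simp_all [bad])
  obtain ⟨H, hHcard, hHS, hHhit⟩ :=
    exists_card_le_disjoint_forall_not_disjoint (bad.erase S) S hnot_sub
  have hroom : (k + 1) * (lr - r) + (S ∪ H).card ≤ Fintype.card V := by
    rcases Nat.eq_zero_or_pos (lr - r) with h0 | hpos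
    · simpa [h0] using card_le_univ (S ∪ H)
    · have hSH : (S ∪ H).card ≤ r + p :=
        (card_union_le S H).trans (by have := card_erase_le (s := bad) (a := S); omega)
      nlinarith [Nat.le_mul_of_pos_right p hpos]
  obtain ⟨P, hPcard, hPSH, hPP⟩ :=
    exists_pairwiseDisjoint_card_eq_disjoint (k + 1) (lr - r) (S ∪ H) hroom
  have hcard : ∀ i, (S ∪ P i).card = lr := fun i => by
    rw [card_union_of_disjoint (disjoint_union_right.mp (hPSH i)).1.symm, hSr, hPcard]
    omega
  have hunique : ∀ i, ∃! T, T ⊆ S ∪ P i ∧ T.card = r ∧ ¬c.sat T σ := fun i => by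
    simpa [bad] using existsUnique_subset_mem_of_disjoint hSmem hHhit subset_union_left
      (disjoint_union_left.mpr ⟨hHS.symm, (disjoint_union_right.mp (hPSH i)).2⟩)
  refine ⟨k + 1, fun i => S ∪ P i, S, k.lt_succ_self, hSr, hSbad, hcard,
    fun _ => subset_union_left, fun i j hij => ?_, hunique,
    fun i => hsimple σ hσ _ (hcard i) (hunique i)⟩
  rw [← union_inter_distrib_left, disjoint_iff_inter_eq_empty.mp (hPP hij), union_empty]

/-- If an `l_r`-simply characterized ranking `r`-CSP, ordered under `σ`, has at most `p ≥ 1`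
inconsistent constraints (and at least one), and `|V| > p(l_r − r) + (l_r − r)(k+1) + r`, then
there is a simple sunflower `{C 1, …, C m}` with `m > k`: `m > k` sets of `l_r` vertices, each
containing a common inconsistent constraint `S`, pairwise intersecting exactly in `S`, each
inducing exactly one inconsistent constraint (namely `S`), and each being a conflict. -/
theorem simple_sunflower_exists
    {V : Type*} [Fintype V] [DecidableEq V] {r lr k p : ℕ}
    (hr : 2 ≤ r) (hrlr : r ≤ lr)
    (c : RankingCSP V r)
    -- the problem is l_r-simply characterized (stated for the instance at hand)
    (hsimple : ∀ σ : V → ℕ, Function.Injective σ → ∀ C : Finset V, C.card = lr →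
      (∃! S : Finset V, S ⊆ C ∧ S.card = r ∧ ¬ c.sat S σ) → IsConflict c C)
    (σ : V → ℕ) (hσ : Function.Injective σ)
    (hp1 : 1 ≤ p)
    (hple : {S : Finset V | S.card = r ∧ ¬ c.sat S σ}.ncard ≤ p)
    (hex : ∃ S : Finset V, S.card = r ∧ ¬ c.sat S σ)
    (hV : p * (lr - r) + (lr - r) * (k + 1) + r < Fintype.card V) :
    ∃ (m : ℕ) (C : Fin m → Finset V) (S : Finset V), k < m ∧
      S.card = r ∧ ¬ c.sat S σ ∧
      (∀ i, (C i).card = lr) ∧ (∀ i, S ⊆ C i) ∧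
      (∀ i j, i ≠ j → C i ∩ C j = S) ∧
      (∀ i, ∃! T : Finset V, T ⊆ C i ∧ T.card = r ∧ ¬ c.sat T σ) ∧
      (∀ i, IsConflict c (C i)) :=
  simple_sunflower_exists_general hrlr c hsimple σ hσ hple hex hV
end

section
/- Any strongly fragile ranking r-CSP with r ≥ 3 is (r+1)-simply characterized: if R_σ = (V, c, σ) is an ordered instance and C is a set of r+1 vertices such that the induced instance on C contains exactly one constraint inconsistent with σ, then C is a conflict (no ranking of C satisfies all constraints induced by C). -/
/-!
Let `τ` be a ranking satisfying every constraint inside `C`, and let `S₀` be the unique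
constraint of `C` violated by `σ`. Every other `r`-subset `C \ {x}` is satisfied by both `σ`
and `τ`, so by strong fragility `σ` and `τ` order `C \ {x}` identically. Since `|C| ≥ 4`, any
two vertices `u, v` of `C` lie in at least two such subsets, at most one of which is `S₀`;
hence `σ` and `τ` order all of `C` identically, and `σ` would satisfy `S₀` as `τ` does.
-/

namespace Finset

variable {α : Type*} [DecidableEq α]

theorem exists_erase_ne_of_three_lt_card {C : Finset α} (hC : 3 < #C) (u v : α)
    (S : Finset α) : ∃ x ∈ C, u ≠ x ∧ v ≠ x ∧ C.erase x ≠ S := by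
  have hcard : 1 < #((C.erase u).erase v) := by
    have := (C.erase u).pred_card_le_card_erase (a := v)
    have := C.pred_card_le_card_erase (a := u)
    omega
  obtain ⟨w, hw, w', hw', hww'⟩ := one_lt_card.mp hcard
  simp only [mem_erase] at hw hw'
  by_cases hS : C.erase w = S
  · refine ⟨w', hw'.2.2, Ne.symm hw'.2.1, Ne.symm hw'.1, fun h' => hww' ?_⟩
    exact C.erase_injOn hw.2.2 hw'.2.2 (hS.trans h'.symm)
  · exact ⟨w, hw.2.2, Ne.symm hw.2.1, Ne.symm hw.1, hS⟩

theorem forall_mem_of_forall_erase_ne {C S : Finset α} (hC : 3 < #C) {P : α → α → Prop}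
    (hP : ∀ x ∈ C, C.erase x ≠ S → ∀ u ∈ C.erase x, ∀ v ∈ C.erase x, P u v) :
    ∀ u ∈ C, ∀ v ∈ C, P u v := by
  intro u hu v hv
  obtain ⟨x, hx, hux, hvx, hxS⟩ := exists_erase_ne_of_three_lt_card hC u v S
  exact hP x hx hxS u (mem_erase.mpr ⟨hux, hu⟩) v (mem_erase.mpr ⟨hvx, hv⟩)

end Finset

theorem strongly_fragile_simply_characterized_general
    {V : Type*} {r : ℕ} (hr : 3 ≤ r)
    (c : RankingCSP V r)
    -- strongly fragile: each constraint is satisfied by exactly one ranking of its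
    -- vertices (up to order-equivalence) and no other
    (hfrag : ∀ S : Finset V, S.card = r →
      (∃ σ : V → ℕ, Set.InjOn σ ↑S ∧ c.sat S σ) ∧
      (∀ σ τ : V → ℕ, Set.InjOn σ ↑S → Set.InjOn τ ↑S → c.sat S σ → c.sat S τ →
        ∀ u ∈ S, ∀ v ∈ S, (σ u < σ v ↔ τ u < τ v)))
    (σ : V → ℕ) (hσ : Function.Injective σ)
    (C : Finset V) (hC : C.card = r + 1)
    (huniq : ∃! S : Finset V, S ⊆ C ∧ S.card = r ∧ ¬ c.sat S σ) :
    IsConflict c C := by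
  classical
  rintro ⟨τ, hτ, hτsat⟩
  obtain ⟨S₀, ⟨hS₀C, hS₀card, hσS₀⟩, hS₀uniq⟩ := huniq
  have hagree : ∀ u ∈ C, ∀ v ∈ C, (σ u < σ v ↔ τ u < τ v) := by
    refine Finset.forall_mem_of_forall_erase_ne (S := S₀) (by omega) fun x hx hxS₀ => ?_
    have hcard : (C.erase x).card = r := by rw [Finset.card_erase_of_mem hx, hC]; rfl
    have hσx : c.sat (C.erase x) σ :=
      by_contra fun h => hxS₀ (hS₀uniq _ ⟨C.erase_subset x, hcard, h⟩)
    exact (hfrag _ hcard).2 σ τ hσ.injOn (hτ.mono (C.erase_subset x)) hσx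
      (hτsat _ (C.erase_subset x) hcard)
  refine hσS₀ ((c.invariant S₀ σ τ fun u hu v hv => ?_).mpr (hτsat S₀ hS₀C hS₀card))
  exact hagree u (hS₀C hu) v (hS₀C hv)

/-- Any strongly fragile ranking `r`-CSP with `r ≥ 3` is `(r+1)`-simply characterized:
if `C` is a set of `r+1` vertices such that the instance induced on `C` contains exactly one
constraint inconsistent with the ranking `σ`, then `C` is a conflict. -/
theorem strongly_fragile_simply_characterized
    {V : Type*} [DecidableEq V] {r : ℕ} (hr : 3 ≤ r)
    (c : RankingCSP V r)
    -- strongly fragile: each constraint is satisfied by exactly one ranking of its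
    -- vertices (up to order-equivalence) and no other
    (hfrag : ∀ S : Finset V, S.card = r →
      (∃ σ : V → ℕ, Set.InjOn σ ↑S ∧ c.sat S σ) ∧
      (∀ σ τ : V → ℕ, Set.InjOn σ ↑S → Set.InjOn τ ↑S → c.sat S σ → c.sat S τ →
        ∀ u ∈ S, ∀ v ∈ S, (σ u < σ v ↔ τ u < τ v)))
    (σ : V → ℕ) (hσ : Function.Injective σ)
    (C : Finset V) (hC : C.card = r + 1)
    (huniq : ∃! S : Finset V, S ⊆ C ∧ S.card = r ∧ ¬ c.sat S σ) :
    IsConflict c C :=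
  strongly_fragile_simply_characterized_general hr c hfrag σ hσ C hC huniq
end

section
/- Consider the r-Dense Feedback Arc Set problem: each r-subset S of V has one selected vertex sel(S) ∈ S, and S is satisfied by a ranking σ iff every u ∈ S \ {sel(S)} satisfies u <_σ sel(S). Let C = {s₁, …, s_{r+1}} be r+1 vertices with s₁ <_σ … <_σ s_{r+1}, and suppose exactly one constraint S induced by C is inconsistent with σ. Then C is a conflict if and only if S is unconsecutive (S ≠ {s₁,…,s_r} and S ≠ {s₂,…,s_{r+1}}) or S = {s₂, …, s_{r+1}}. -/
/-!
Write `m` for the `σ`-largest vertex of `C`; every `r`-subset of `C` other than `C.erase m`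
contains `m`, so each satisfied one selects `m`. If the bad constraint `S` is `C.erase m`, lifting
`sel S` to just below `m` satisfies everything. Otherwise `m ∈ S` and `sel S ≠ m`, and removing
from `C` a third vertex of `S` gives a satisfied constraint that forces `sel S` below `m`, while
`S` forces `m` below `sel S`.
-/

/-- In `r`-Dense Feedback Arc Set, the constraint on an `r`-subset `S` with selected
vertex `sel S` is satisfied by a ranking `σ` iff every other vertex of `S` precedes
`sel S` in `σ`. -/
def fastSat {V : Type*} (sel : Finset V → V) (S : Finset V) (σ : V → ℕ) : Prop :=
  ∀ u ∈ S, u ≠ sel S → σ u < σ (sel S)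

/-- `C` is a conflict for the `r`-FAST instance `sel`: no ranking of `C` satisfies all
constraints on `r`-subsets of `C`. -/
def fastConflict {V : Type*} (r : ℕ) (sel : Finset V → V) (C : Finset V) : Prop :=
  ¬ ∃ σ : V → ℕ, Set.InjOn σ ↑C ∧ ∀ S ⊆ C, S.card = r → fastSat sel S σ

open Finset

section

variable {V : Type*} {r : ℕ} {sel : Finset V → V} {σ : V → ℕ}

theorem sel_eq_of_fastSat_of_forall_lt {T : Finset V} {m : V} (hsat : fastSat sel T σ)
    (hselT : sel T ∈ T) (hm : m ∈ T) (htop : ∀ u ∈ T, u ≠ m → σ u < σ m) : sel T = m := by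
  by_contra hne
  exact (htop _ hselT hne).asymm (hsat m hm (Ne.symm hne))

theorem fastConflict_of_sel_mem_of_sel_mem {C S T : Finset V} (hSC : S ⊆ C) (hTC : T ⊆ C)
    (hS : S.card = r) (hT : T.card = r) (hST : sel S ∈ T) (hTS : sel T ∈ S)
    (hne : sel S ≠ sel T) : fastConflict r sel C := by
  rintro ⟨τ, -, hτ⟩
  exact (hτ S hSC hS (sel T) hTS hne.symm).asymm (hτ T hTC hT (sel S) hST hne)

variable [DecidableEq V]

theorem Finset.mem_of_ne_erase {C T : Finset V} {m : V} (hTC : T ⊆ C)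
    (hcard : C.card = T.card + 1) (hm : m ∈ C) (hne : T ≠ C.erase m) : m ∈ T := by
  by_contra hmT
  refine hne (eq_of_subset_of_card_le (fun u hu => mem_erase.2 ⟨?_, hTC hu⟩) ?_)
  · rintro rfl
    exact hmT hu
  · rw [card_erase_of_mem hm]
    omega

variable {C S : Finset V} {m : V}

theorem not_fastConflict_of_unsat_eq_erase (hsel : ∀ T : Finset V, T.card = r → sel T ∈ T)
    (hinj : Set.InjOn σ C) (hm : m ∈ C) (htop : ∀ u ∈ C, u ≠ m → σ u < σ m)
    (hcard : C.card = r + 1)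
    (hsat : ∀ T ⊆ C, T.card = r → T ≠ C.erase m → fastSat sel T σ) :
    ¬ fastConflict r sel C := by
  have hScard : (C.erase m).card = r := by rw [card_erase_of_mem hm, hcard, Nat.add_sub_cancel]
  obtain ⟨ham, haC⟩ := mem_erase.1 (hsel _ hScard)
  generalize ha : sel (C.erase m) = a at ham haC
  have hσa := htop a haC ham
  -- doubling `σ` leaves the odd slot `2 σ m - 1` free for `a`
  let τ : V → ℕ := fun v => if v = a then 2 * σ m - 1 else 2 * σ v
  refine not_not.2 ⟨τ, fun u hu v hv huv => ?_, fun T hTC hT => ?_⟩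
  · simp only [τ] at huv
    split_ifs at huv with hua hva hva
    · exact hua.trans hva.symm
    · omega
    · omega
    · exact hinj hu hv (by omega)
  by_cases hTS : T = C.erase m
  · subst hTS
    intro u hu hua
    rw [ha] at hua ⊢
    have := htop u (mem_of_mem_erase hu) (ne_of_mem_erase hu)
    simp only [τ, if_neg hua, if_pos rfl]
    omega
  · have hselT : sel T = m := sel_eq_of_fastSat_of_forall_lt (hsat T hTC hT hTS) (hsel T hT)
      (mem_of_ne_erase hTC (by omega) hm hTS) (fun u hu => htop u (hTC hu))
    intro u hu hum
    rw [hselT] at hum ⊢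
    have := htop u (hTC hu) hum
    simp only [τ, if_neg ham.symm]
    split_ifs <;> omega

theorem fastConflict_of_unsat_ne_erase (hr : 3 ≤ r)
    (hsel : ∀ T : Finset V, T.card = r → sel T ∈ T) (hm : m ∈ C)
    (htop : ∀ u ∈ C, u ≠ m → σ u < σ m) (hcard : C.card = r + 1)
    (hSC : S ⊆ C) (hScard : S.card = r) (hSbad : ¬ fastSat sel S σ)
    (hsat : ∀ T ⊆ C, T.card = r → T ≠ S → fastSat sel T σ) (hS : S ≠ C.erase m) :
    fastConflict r sel C := by
  have hmS : m ∈ S := mem_of_ne_erase hSC (by omega) hm hS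
  have hselm : sel S ≠ m := fun h => hSbad fun u hu hu' => h ▸ htop u (hSC hu) (h ▸ hu')
  obtain ⟨j, hj⟩ : ((S.erase (sel S)).erase m).Nonempty := by
    rw [← card_pos]
    have h₁ := pred_card_le_card_erase (s := S) (a := sel S)
    have h₂ := pred_card_le_card_erase (s := S.erase (sel S)) (a := m)
    omega
  obtain ⟨hjm, hjsel, hjS⟩ : j ≠ m ∧ j ≠ sel S ∧ j ∈ S := by simpa only [mem_erase] using hj
  have hTcard : (C.erase j).card = r := by
    rw [card_erase_of_mem (hSC hjS), hcard, Nat.add_sub_cancel]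
  have hTS : C.erase j ≠ S := fun h => notMem_erase j C (h ▸ hjS)
  have hselT : sel (C.erase j) = m :=
    sel_eq_of_fastSat_of_forall_lt (hsat _ (erase_subset _ _) hTcard hTS) (hsel _ hTcard)
      (mem_erase.2 ⟨hjm.symm, hm⟩) (fun u hu => htop u (mem_of_mem_erase hu))
  refine fastConflict_of_sel_mem_of_sel_mem hSC (erase_subset j C) hScard hTcard
    (mem_erase.2 ⟨hjsel.symm, hSC (hsel S hScard)⟩) (hselT ▸ hmS) ?_
  rwa [hselT]

theorem fastConflict_iff_ne_erase_of_unique_unsat (hr : 3 ≤ r)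
    (hsel : ∀ T : Finset V, T.card = r → sel T ∈ T) (hinj : Set.InjOn σ C) (hm : m ∈ C)
    (htop : ∀ u ∈ C, u ≠ m → σ u < σ m) (hcard : C.card = r + 1)
    (hSC : S ⊆ C) (hScard : S.card = r) (hSbad : ¬ fastSat sel S σ)
    (hsat : ∀ T ⊆ C, T.card = r → T ≠ S → fastSat sel T σ) :
    fastConflict r sel C ↔ S ≠ C.erase m :=
  ⟨fun hconf hS => not_fastConflict_of_unsat_eq_erase hsel hinj hm htop hcard (hS ▸ hsat) hconf,
    fastConflict_of_unsat_ne_erase hr hsel hm htop hcard hSC hScard hSbad hsat⟩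

theorem Finset.image_succAbove_eq_erase {n : ℕ} {s : Fin (n + 1) → V} (hs : Function.Injective s)
    (p : Fin (n + 1)) : univ.image (fun i => s (p.succAbove i)) = (univ.image s).erase (s p) := by
  rw [← image_erase hs, ← compl_singleton, ← Fin.image_succAbove_univ, image_image]
  rfl

end

/-- Conflict characterization for `r`-FAST: if `C = {s₁ <_σ … <_σ s_{r+1}}` induces exactly
one inconsistent constraint `S`, then `C` is a conflict iff `S` is unconsecutive
(i.e. `S ≠ {s₁,…,s_r}` and `S ≠ {s₂,…,s_{r+1}}`) or `S = {s₂,…,s_{r+1}}`. -/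
theorem fast_conflict_characterization
    {V : Type*} [DecidableEq V] {r : ℕ} (hr : 3 ≤ r)
    (sel : Finset V → V) (hsel : ∀ S : Finset V, S.card = r → sel S ∈ S)
    (σ : V → ℕ) (s : Fin (r + 1) → V)
    (hmono : ∀ i j : Fin (r + 1), i < j → σ (s i) < σ (s j))
    (C : Finset V) (hC : C = Finset.image s Finset.univ)
    (S : Finset V) (hSC : S ⊆ C) (hScard : S.card = r)
    (hSbad : ¬ fastSat sel S σ)
    (huniq : ∀ T ⊆ C, T.card = r → ¬ fastSat sel T σ → T = S) :
    (fastConflict r sel C ↔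
      ((S ≠ Finset.image (fun i : Fin r => s i.castSucc) Finset.univ ∧
        S ≠ Finset.image (fun i : Fin r => s i.succ) Finset.univ) ∨
       S = Finset.image (fun i : Fin r => s i.succ) Finset.univ)) := by
  have hσs : StrictMono (σ ∘ s) := fun i j => hmono i j
  have hs : Function.Injective s := hσs.injective.of_comp
  have hsat : ∀ T ⊆ C, T.card = r → T ≠ S → fastSat sel T σ :=
    fun T hTC hT hTS => by_contra fun h => hTS (huniq T hTC hT h)
  subst hC
  have hinj : Set.InjOn σ ↑(univ.image s) := by
    rw [coe_image, coe_univ, Set.image_univ]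
    exact hσs.injective.injOn_range
  have htop : ∀ u ∈ univ.image s, u ≠ s (Fin.last r) → σ u < σ (s (Fin.last r)) := by
    simp only [mem_image, mem_univ, true_and, forall_exists_index, forall_apply_eq_imp_iff]
    exact fun i hi => hmono _ _ ((Fin.le_last i).lt_of_ne (by rintro rfl; exact hi rfl))
  have hcard : (univ.image s).card = r + 1 := by
    rw [card_image_of_injective _ hs, card_univ, Fintype.card_fin]
  have hfirst := image_succAbove_eq_erase hs (Fin.last r)
  have hlast := image_succAbove_eq_erase hs 0
  simp only [Fin.succAbove_last, Fin.succAbove_zero] at hfirst hlast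
  rw [hfirst, hlast, fastConflict_iff_ne_erase_of_unique_unsat hr hsel hinj
    (mem_image_of_mem s (mem_univ _)) htop hcard hSC hScard hSbad hsat]
  have hne : (univ.image s).erase (s (Fin.last r)) ≠ (univ.image s).erase (s 0) := fun h => by
    have := congrArg Fin.val (hs ((erase_inj _ (mem_image_of_mem s (mem_univ _))).1 h))
    simp only [Fin.val_last, Fin.val_zero] at this
    omega
  by_cases hSlast : S = (univ.image s).erase (s 0)
  · simpa [hSlast] using hne.symm
  · simp [hSlast]
end

section
/- In r-Dense Feedback Arc Set, if C = {s₁, …, s_{r+1}} with s₁ <_σ … <_σ s_{r+1} and the only constraint induced by C that is inconsistent with σ is S = {s₁, …, s_r}, then C is not a conflict: the ranking obtained from σ by swapping sel(S) and s_r satisfies all constraints induced by C. -/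
open Finset

def IsStrictMaxOn {V β : Type*} [LT β] (σ : V → β) (A : Finset V) (m : V) : Prop :=
  ∀ u ∈ A, u ≠ m → σ u < σ m

namespace IsStrictMaxOn

variable {V β : Type*} [LT β] {σ : V → β} {A B : Finset V} {m : V}

theorem mono (h : IsStrictMaxOn σ A m) (hBA : B ⊆ A) : IsStrictMaxOn σ B m :=
  fun u hu => h u (hBA hu)

theorem eq {β : Type*} [Preorder β] {σ : V → β} {m' : V} (h : IsStrictMaxOn σ A m)
    (h' : IsStrictMaxOn σ A m') (hm : m ∈ A) (hm' : m' ∈ A) : m = m' := by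
  by_contra hne
  exact lt_asymm (h' m hm hne) (h m' hm' (Ne.symm hne))

theorem comp {f : V → V} (h : IsStrictMaxOn σ A m) (hf : Function.Injective f)
    (hmaps : Set.MapsTo f B A) {m' : V} (hm : f m' = m) : IsStrictMaxOn (σ ∘ f) B m' := by
  intro u hu hne
  rw [Function.comp_apply, Function.comp_apply, hm]
  exact h (f u) (hmaps hu) fun hfu => hne (hf (hfu.trans hm.symm))

end IsStrictMaxOn

theorem Finset.mem_of_subset_of_ne_erase {V : Type*} [DecidableEq V] {C T : Finset V} {m : V}
    (hTC : T ⊆ C) (hcard : (C.erase m).card ≤ T.card) (hne : T ≠ C.erase m) : m ∈ T := by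
  by_contra hm
  exact hne (eq_of_subset_of_card_le (subset_erase.2 ⟨hTC, hm⟩) hcard)

theorem Finset.mapsTo_swap {V : Type*} [DecidableEq V] {A : Finset V} {a b : V}
    (ha : a ∈ A) (hb : b ∈ A) : Set.MapsTo (Equiv.swap a b) A A :=
  (Equiv.swap_bijOn_self (by simp [ha, hb])).mapsTo

theorem isStrictMaxOn_image_of_isTop {ι V β : Type*} [DecidableEq V] [Fintype ι] [PartialOrder ι]
    [Preorder β] {σ : V → β} {f : ι → V} (hf : StrictMono (σ ∘ f)) {i : ι} (hi : IsTop i) :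
    IsStrictMaxOn σ (univ.image f) (f i) := by
  intro u hu hne
  obtain ⟨j, -, rfl⟩ := mem_image.1 hu
  exact hf ((hi j).lt_of_ne fun hji => hne (congrArg f hji))

theorem fastSat_iff_isStrictMaxOn {V : Type*} {sel : Finset V → V} {T : Finset V}
    {σ : V → ℕ} : fastSat sel T σ ↔ IsStrictMaxOn σ T (sel T) :=
  Iff.rfl

section chain

variable {V : Type*} [DecidableEq V] {n : ℕ} {s : Fin (n + 1) → V}

theorem image_castSucc_eq_erase_last (hs : Function.Injective s) :
    univ.image (fun i : Fin n => s i.castSucc) = (univ.image s).erase (s (Fin.last n)) := by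
  ext u
  simp only [mem_image, mem_univ, true_and, mem_erase, Fin.exists_fin_succ' (P := fun i => s i = u)]
  constructor
  · rintro ⟨i, rfl⟩
    exact ⟨fun h => Fin.castSucc_ne_last i (hs h), .inl ⟨i, rfl⟩⟩
  · rintro ⟨hne, ⟨i, hi⟩ | hlast⟩
    · exact ⟨i, hi⟩
    · exact absurd hlast.symm hne

theorem card_image_castSucc (hs : Function.Injective s) :
    (univ.image fun i : Fin n => s i.castSucc).card = n := by
  rw [card_image_of_injective (f := fun i : Fin n => s i.castSucc) _
    (hs.comp (Fin.castSucc_injective n)), card_univ, Fintype.card_fin]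

theorem isStrictMaxOn_image_castSucc {β : Type*} [Preorder β] {σ : V → β}
    (hs : StrictMono (σ ∘ s)) (hn : 0 < n) :
    IsStrictMaxOn σ (univ.image fun i : Fin n => s i.castSucc) (s ⟨n - 1, by omega⟩) :=
  isStrictMaxOn_image_of_isTop (f := fun i : Fin n => s i.castSucc) (i := ⟨n - 1, by omega⟩)
    (fun _ _ hij => hs (Fin.castSucc_lt_castSucc_iff.2 hij))
    fun j => Fin.le_def.2 (Nat.le_sub_one_of_lt j.isLt)

end chain

section swap

variable {V : Type*} [DecidableEq V] {sel : Finset V → V} {σ : V → ℕ}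

theorem fastSat_comp_swap_of_isStrictMaxOn {S : Finset V} {b : V} (hb : IsStrictMaxOn σ S b)
    (hselS : sel S ∈ S) (hbS : b ∈ S) : fastSat sel S (σ ∘ Equiv.swap (sel S) b) :=
  hb.comp (Equiv.injective _) (Finset.mapsTo_swap hselS hbS) (Equiv.swap_apply_left _ _)

theorem fastSat_comp_swap_of_mem_erase {C T : Finset V} {m a b : V} (hm : IsStrictMaxOn σ C m)
    (hTC : T ⊆ C) (hmT : m ∈ T) (hselT : sel T ∈ T) (hT : fastSat sel T σ)
    (ha : a ∈ C.erase m) (hb : b ∈ C.erase m) : fastSat sel T (σ ∘ Equiv.swap a b) := by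
  obtain ⟨ham, haC⟩ := mem_erase.1 ha
  obtain ⟨hbm, hbC⟩ := mem_erase.1 hb
  rw [fastSat_iff_isStrictMaxOn, (fastSat_iff_isStrictMaxOn.1 hT).eq (hm.mono hTC) hselT hmT]
  exact hm.comp (Equiv.injective _) ((Finset.mapsTo_swap haC hbC).mono_left
    (coe_subset.2 hTC)) (Equiv.swap_apply_of_ne_of_ne ham.symm hbm.symm)

end swap

/-- If `C = {s₁ <_σ … <_σ s_{r+1}}` and the only constraint induced by `C` inconsistent
with `σ` is `S = {s₁,…,s_r}`, then `C` is not a conflict: the ranking obtained from `σ`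
by swapping `sel S` and `s_r` satisfies all constraints induced by `C`. -/
theorem fast_first_r_not_conflict
    {V : Type*} [DecidableEq V] {r : ℕ}
    (sel : Finset V → V) (hsel : ∀ S : Finset V, S.card = r → sel S ∈ S)
    (σ : V → ℕ) (s : Fin (r + 1) → V)
    (hmono : ∀ i j : Fin (r + 1), i < j → σ (s i) < σ (s j))
    (C : Finset V) (hC : C = Finset.image s Finset.univ)
    (S : Finset V) (hS : S = Finset.image (fun i : Fin r => s i.castSucc) Finset.univ)
    (huniq : ∀ T ⊆ C, T.card = r → ¬ fastSat sel T σ → T = S) :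
    (∀ T ⊆ C, T.card = r →
        fastSat sel T (σ ∘ (Equiv.swap (sel S) (s ⟨r - 1, by omega⟩)))) ∧
      ¬ fastConflict r sel C := by
  have hσs : StrictMono (σ ∘ s) := hmono
  have hs : Function.Injective s := hσs.injective.of_comp
  have hSC : S = C.erase (s (Fin.last r)) := hS.trans (hC ▸ image_castSucc_eq_erase_last hs)
  have hScard : S.card = r := hS ▸ card_image_castSucc hs
  have haS : sel S ∈ S := hsel S hScard
  have hr : 0 < r := hScard ▸ card_pos.2 ⟨_, haS⟩
  have hbS : s ⟨r - 1, by omega⟩ ∈ S := by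
    rw [hS]
    exact mem_image_of_mem _ (mem_univ (⟨r - 1, by omega⟩ : Fin r))
  have hSmax : IsStrictMaxOn σ S (s ⟨r - 1, by omega⟩) := hS ▸ isStrictMaxOn_image_castSucc hσs hr
  have haC : sel S ∈ C.erase (s (Fin.last r)) := hSC.le haS
  have hbC : s ⟨r - 1, by omega⟩ ∈ C.erase (s (Fin.last r)) := hSC.le hbS
  have hsat : ∀ T ⊆ C, T.card = r →
      fastSat sel T (σ ∘ (Equiv.swap (sel S) (s ⟨r - 1, by omega⟩))) := by
    intro T hTC hT
    by_cases hTS : T = S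
    · rw [hTS]
      exact fastSat_comp_swap_of_isStrictMaxOn hSmax haS hbS
    · exact fastSat_comp_swap_of_mem_erase (hC ▸ isStrictMaxOn_image_of_isTop hσs Fin.le_last) hTC
        (mem_of_subset_of_ne_erase hTC (hSC ▸ hScard ▸ hT.ge) (hSC ▸ hTS)) (hsel T hT)
        (not_not.1 (mt (huniq T hTC hT) hTS)) haC hbC
  have hswapC := Finset.mapsTo_swap (mem_of_mem_erase haC) (mem_of_mem_erase hbC)
  exact ⟨hsat, fun hconf => hconf ⟨_, hσs.injective.injOn_range.comp (Equiv.injective _).injOn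
    (by simpa [hC] using hswapC), hsat⟩⟩
end

section
/- For no l ∈ ℕ is r-Dense Feedback Arc Set l-simply characterized: for every q > r there exists an ordered instance and a set C of q vertices inducing exactly one inconsistent constraint such that C is not a conflict. -/
/-! Take the ordered instance on `Fin q` in which every `r`-set selects its maximum, except the
initial segment `S = {0, …, r - 1}`, which selects `0`. Under the identity ranking every `r`-set
other than `S` is satisfied, and `S` is not. Yet all of `Fin q` is consistent: swapping `0` and
`r - 1` makes `S` satisfied, and every other `r`-set keeps its maximum, which lies outside `S`
and hence above both swapped vertices. -/

open Finset

section

variable {V : Type*} [LinearOrder V]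

theorem fastSat_of_isGreatest {sel : Finset V → V} {T : Finset V} {σ : V → ℕ}
    (hσ : StrictMono σ) (h : IsGreatest (T : Set V) (sel T)) : fastSat sel T σ :=
  fun _ hu hne => hσ (lt_of_le_of_ne (h.2 hu) hne)

theorem not_fastSat_of_sel_lt {sel : Finset V → V} {S : Finset V} {σ : V → ℕ}
    (hσ : StrictMono σ) {u : V} (hu : u ∈ S) (h : sel S < u) : ¬ fastSat sel S σ :=
  fun hsat => (hσ h).asymm (hsat u hu h.ne')

def maxSelExcept (S : Finset V) (z : V) (T : Finset V) : V :=
  if h : T.Nonempty ∧ T ≠ S then T.max' h.1 else z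

section maxSelExcept

variable {S T : Finset V} {z : V}

@[simp]
theorem maxSelExcept_self : maxSelExcept S z S = z := by
  simp [maxSelExcept]

theorem maxSelExcept_of_ne (hT : T.Nonempty) (hTS : T ≠ S) :
    maxSelExcept S z T = T.max' hT := by
  simp [maxSelExcept, hT, hTS]

theorem maxSelExcept_mem (hz : z ∈ S) (hT : T.Nonempty) : maxSelExcept S z T ∈ T := by
  by_cases hTS : T = S
  · subst hTS
    rwa [maxSelExcept_self]
  · rw [maxSelExcept_of_ne hT hTS]
    exact T.max'_mem hT

theorem fastSat_maxSelExcept_of_ne {σ : V → ℕ} (hσ : StrictMono σ) (hT : T.Nonempty)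
    (hTS : T ≠ S) : fastSat (maxSelExcept S z) T σ :=
  fastSat_of_isGreatest hσ (by rw [maxSelExcept_of_ne hT hTS]; exact T.isGreatest_max' hT)

end maxSelExcept

theorem swap_apply_lt_of_lt {a z b u m : V} (hz : z < a) (hb : b < a) (ham : a ≤ m)
    (hum : u < m) : Equiv.swap z b u < m := by
  rw [Equiv.swap_apply_def]
  split_ifs
  · exact hb.trans_le ham
  · exact hz.trans_le ham
  · exact hum

theorem swap_apply_lt_of_covBy {a z b u : V} (hzb : z < b) (hba : b ⋖ a) (hua : u < a)
    (huz : u ≠ z) : Equiv.swap z b u < b := by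
  by_cases hub : u = b
  · rwa [hub, Equiv.swap_apply_right]
  · rw [Equiv.swap_apply_of_ne_of_ne huz hub]
    exact lt_of_le_of_ne (hba.le_of_lt hua) hub

variable [LocallyFiniteOrderBot V]

theorem le_max'_of_ne_Iio {a : V} {T : Finset V} (hT : T.Nonempty) (hTa : T ≠ Iio a)
    (hcard : #T = #(Iio a)) : a ≤ T.max' hT := by
  obtain ⟨t, ht, hta⟩ := not_subset.mp fun hsub => hTa (eq_of_subset_of_card_le hsub hcard.ge)
  exact (not_lt.mp (by simpa using hta)).trans (T.le_max' t ht)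

theorem fastSat_maxSelExcept_Iio_swap {a z b : V} {σ : V → ℕ} (hσ : StrictMono σ)
    (hzb : z < b) (hba : b ⋖ a) {T : Finset V} (hcard : #T = #(Iio a)) :
    fastSat (maxSelExcept (Iio a) z) T (σ ∘ Equiv.swap z b) := by
  have hT : T.Nonempty := card_pos.mp (hcard ▸ card_pos.mpr ⟨b, mem_Iio.mpr hba.lt⟩)
  by_cases hTa : T = Iio a
  · subst hTa
    intro u hu huz
    rw [maxSelExcept_self] at huz ⊢
    rw [Function.comp_apply, Function.comp_apply, Equiv.swap_apply_left]
    exact hσ (swap_apply_lt_of_covBy hzb hba (mem_Iio.mp hu) huz)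
  · intro u hu hum
    rw [maxSelExcept_of_ne hT hTa] at hum ⊢
    have ham := le_max'_of_ne_Iio hT hTa hcard
    have hza : z < a := hzb.trans hba.lt
    have hmax : Equiv.swap z b (T.max' hT) = T.max' hT :=
      Equiv.swap_apply_of_ne_of_ne (hza.trans_le ham).ne' (hba.lt.trans_le ham).ne'
    rw [Function.comp_apply, Function.comp_apply, hmax]
    exact hσ (swap_apply_lt_of_lt hza hba.lt ham (lt_of_le_of_ne (T.le_max' u hu) hum))

end

/-- `r`-Dense Feedback Arc Set is not `l`-simply characterized for any `l`: for every
`q > r` there is an ordered instance (on the `q` vertices `Fin q`) and a set `C` of `q`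
vertices (here all of them) inducing exactly one inconsistent constraint, such that `C`
is not a conflict. -/
theorem fast_not_simply_characterized (r q : ℕ) (hr : 3 ≤ r) (hq : r < q) :
    ∃ sel : Finset (Fin q) → Fin q,
      (∀ S : Finset (Fin q), S.card = r → sel S ∈ S) ∧
      ∃ σ : Fin q → ℕ, Function.Injective σ ∧
        ∃ S : Finset (Fin q), S.card = r ∧ ¬ fastSat sel S σ ∧
          (∀ T : Finset (Fin q), T.card = r → T ≠ S → fastSat sel T σ) ∧
          ¬ fastConflict r sel (Finset.univ : Finset (Fin q)) := by
  let a : Fin q := ⟨r, hq⟩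
  let z : Fin q := ⟨0, by omega⟩
  let b : Fin q := ⟨r - 1, by omega⟩
  have hzb : z < b := Fin.mk_lt_mk.mpr (by omega)
  have hba : b ⋖ a := ⟨Fin.mk_lt_mk.mpr (by omega), fun c hbc hca => by
    rw [Fin.lt_def] at hbc hca; simp only [a, b] at hbc hca; omega⟩
  have hcard : #(Iio a) = r := Fin.card_Iio a
  have hne (T : Finset (Fin q)) (hT : #T = r) : T.Nonempty := card_pos.mp (by omega)
  refine ⟨maxSelExcept (Iio a) z,
    fun T hT => maxSelExcept_mem (mem_Iio.mpr (hzb.trans hba.lt)) (hne T hT),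
    Fin.val, Fin.val_injective, Iio a, hcard,
    not_fastSat_of_sel_lt Fin.val_strictMono (mem_Iio.mpr hba.lt) (by rwa [maxSelExcept_self]),
    fun T hT hTa => fastSat_maxSelExcept_of_ne Fin.val_strictMono (hne T hT) hTa, ?_⟩
  exact fun hconflict => hconflict ⟨_, (Fin.val_injective.comp (Equiv.swap z b).injective).injOn,
    fun T _ hT => fastSat_maxSelExcept_Iio_swap Fin.val_strictMono hzb hba (hT.trans hcard.symm)⟩
end

section
/- Consider r-Dense Betweenness with r ≥ 4: a constraint S of size r has two selected vertices and is satisfied by a ranking σ iff every non-selected vertex of S lies strictly between the two selected vertices in σ. Let C = {s₁, …, s_{r+1}} with s₁ <_σ … <_σ s_{r+1}, and suppose exactly one induced constraint S is inconsistent with σ. If S is unconsecutive (the missing vertex s_i of C satisfies 1 < i < r+1), then C is a conflict. -/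
/-- An instance of `r`-Dense Betweenness: every `r`-subset has two distinct selected
vertices. -/
structure BITSel (V : Type*) (r : ℕ) where
  sel1 : Finset V → V
  sel2 : Finset V → V
  mem1 : ∀ S : Finset V, S.card = r → sel1 S ∈ S
  mem2 : ∀ S : Finset V, S.card = r → sel2 S ∈ S
  ne : ∀ S : Finset V, S.card = r → sel1 S ≠ sel2 S

/-- A constraint `S` is satisfied by a ranking `σ` iff every non-selected vertex of `S`
lies strictly between the two selected vertices in `σ`. -/
def bitSat {V : Type*} {r : ℕ} (c : BITSel V r) (S : Finset V) (σ : V → ℕ) : Prop :=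
  ∀ u ∈ S, u ≠ c.sel1 S → u ≠ c.sel2 S →
    (σ (c.sel1 S) < σ u ∧ σ u < σ (c.sel2 S)) ∨
    (σ (c.sel2 S) < σ u ∧ σ u < σ (c.sel1 S))

/-- `C` is a conflict for the `r`-BIT instance `c`. -/
def bitConflict {V : Type*} {r : ℕ} (c : BITSel V r) (C : Finset V) : Prop :=
  ¬ ∃ σ : V → ℕ, Set.InjOn σ ↑C ∧ ∀ S ⊆ C, S.card = r → bitSat c S σ

/-!
Let `a = s₁` and `b = s_{r+1}`. Every constraint `T ≠ S` of `C` is satisfied by `σ`, and when it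
contains both `a` and `b` these are its `σ`-extremes, so its selected pair is `{a, b}`. A ranking
`τ` satisfying all constraints of `C` must then put every vertex of such a `T` strictly between
`a` and `b`. As `r ≥ 4`, every vertex of `C` other than `a, b` lies in such a `T`, so `a` and `b`
are the `τ`-extremes of `C`, hence of `S` (which contains both, being unconsecutive). Then the
selected pair of `S` is `{a, b}` as well, and `σ` would satisfy `S`.
-/

def Brackets {V : Type*} (ρ : V → ℕ) (a b : V) (T : Finset V) : Prop :=
  ∀ u ∈ T, u ≠ a → u ≠ b → (ρ a < ρ u ∧ ρ u < ρ b) ∨ (ρ b < ρ u ∧ ρ u < ρ a)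

namespace Brackets

variable {V : Type*} {ρ : V → ℕ} {a b u v : V} {T T' : Finset V}

theorem mono (h : Brackets ρ a b T) (hT' : T' ⊆ T) : Brackets ρ a b T' :=
  fun x hx => h x (hT' hx)

theorem symm (h : Brackets ρ a b T) : Brackets ρ b a T :=
  fun x hx hxb hxa => (h x hx hxa hxb).symm

/-- Both pairs must be the two strict `ρ`-extremes of `T`. -/
theorem sym2_eq (h₁ : Brackets ρ a b T) (h₂ : Brackets ρ u v T) (ha : a ∈ T) (hb : b ∈ T)
    (hu : u ∈ T) (hv : v ∈ T) (huv : u ≠ v) : s(a, b) = s(u, v) := by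
  rw [Sym2.eq_iff]
  have hau := h₂ a ha; have hbu := h₂ b hb
  have hua := h₁ u hu; have hva := h₁ v hv
  by_cases a = u <;> by_cases a = v <;> by_cases b = u <;> by_cases b = v <;> grind

theorem of_strictMono_comp [DecidableEq V] {n : ℕ} {f : Fin (n + 1) → V}
    (hf : StrictMono (ρ ∘ f)) : Brackets ρ (f 0) (f (Fin.last n)) (Finset.univ.image f) := by
  intro u hu hu0 hulast
  obtain ⟨m, -, rfl⟩ := Finset.mem_image.1 hu
  have hm0 : m ≠ 0 := fun h => hu0 (congrArg f h)
  have hmlast : m ≠ Fin.last n := fun h => hulast (congrArg f h)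
  exact .inl ⟨hf (Fin.pos_of_ne_zero hm0), hf (Fin.lt_last_iff_ne_last.2 hmlast)⟩

end Brackets

namespace BITSel

variable {V : Type*} {r : ℕ} (c : BITSel V r) {ρ : V → ℕ} {a b : V} {T : Finset V}

theorem bitSat_iff_brackets : bitSat c T ρ ↔ Brackets ρ (c.sel1 T) (c.sel2 T) T := Iff.rfl

theorem bitSat_iff_brackets_of_sel_eq (h : s(c.sel1 T, c.sel2 T) = s(a, b)) :
    bitSat c T ρ ↔ Brackets ρ a b T := by
  rcases Sym2.eq_iff.1 h with ⟨h1, h2⟩ | ⟨h1, h2⟩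
  · rw [bitSat_iff_brackets, h1, h2]
  · rw [bitSat_iff_brackets, h1, h2]
    exact ⟨Brackets.symm, Brackets.symm⟩

theorem sel_eq_of_brackets (hT : T.card = r) (hsat : bitSat c T ρ) (h : Brackets ρ a b T)
    (ha : a ∈ T) (hb : b ∈ T) : s(c.sel1 T, c.sel2 T) = s(a, b) :=
  (h.sym2_eq hsat ha hb (c.mem1 T hT) (c.mem2 T hT) (c.ne T hT)).symm

end BITSel

open BITSel in
theorem bitConflict_of_unique_unsat {V : Type*} [DecidableEq V] {r : ℕ} (hr : 4 ≤ r)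
    (c : BITSel V r) {σ : V → ℕ} {a b : V} {C S : Finset V} (hC : C.card = r + 1)
    (hσ : Brackets σ a b C) (hSC : S ⊆ C) (hS : S.card = r) (haS : a ∈ S) (hbS : b ∈ S)
    (hSbad : ¬ bitSat c S σ) (huniq : ∀ T ⊆ C, T.card = r → ¬ bitSat c T σ → T = S) :
    bitConflict c C := by
  rintro ⟨τ, -, hτ⟩
  have hbrackets : ∀ T ⊆ C, T.card = r → T ≠ S → a ∈ T → b ∈ T → Brackets τ a b T := by
    intro T hTC hT hTS haT hbT
    have hσT : bitSat c T σ := not_not.1 (mt (huniq T hTC hT) hTS)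
    exact (c.bitSat_iff_brackets_of_sel_eq
      (c.sel_eq_of_brackets hT hσT (hσ.mono hTC) haT hbT)).1 (hτ T hTC hT)
  have hτC : Brackets τ a b C := by
    intro x hx hxa hxb
    obtain ⟨y, hyS, hy⟩ : ∃ y ∈ S, y ∉ ({a, b, x} : Finset V) :=
      Finset.exists_mem_notMem_of_card_lt_card (Finset.card_le_three.trans_lt (by omega))
    simp only [Finset.mem_insert, Finset.mem_singleton, not_or] at hy
    obtain ⟨hya, hyb, hyx⟩ := hy
    have hyC := hSC hyS
    have hmem : ∀ z ∈ C, z ≠ y → z ∈ C.erase y := fun z hz hzy => Finset.mem_erase.2 ⟨hzy, hz⟩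
    refine hbrackets (C.erase y) (Finset.erase_subset y C) ?_ ?_ (hmem a (hSC haS) (Ne.symm hya))
      (hmem b (hSC hbS) (Ne.symm hyb)) x (hmem x hx (Ne.symm hyx)) hxa hxb
    · rw [Finset.card_erase_of_mem hyC, hC, Nat.add_sub_cancel]
    · exact fun h => Finset.notMem_erase y C (h ▸ hyS)
  have hsel := c.sel_eq_of_brackets hS (hτ S hSC hS) (hτC.mono hSC) haS hbS
  exact hSbad ((c.bitSat_iff_brackets_of_sel_eq hsel).2 (hσ.mono hSC))

/-- In `r`-BIT (`r ≥ 4`): if `C = {s₁ <_σ … <_σ s_{r+1}}` induces exactly one constraint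
`S` inconsistent with `σ`, and `S` is unconsecutive (the missing vertex `s_i` of `C`
satisfies `1 < i < r+1`), then `C` is a conflict. -/
theorem bit_unconsecutive_conflict
    {V : Type*} [DecidableEq V] {r : ℕ} (hr : 4 ≤ r)
    (c : BITSel V r)
    (σ : V → ℕ) (s : Fin (r + 1) → V)
    (hmono : ∀ i j : Fin (r + 1), i < j → σ (s i) < σ (s j))
    (C : Finset V) (hC : C = Finset.image s Finset.univ)
    (i : Fin (r + 1)) (hi0 : i ≠ 0) (hilast : i ≠ Fin.last r)
    (S : Finset V) (hS : S = C.erase (s i))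
    (hSbad : ¬ bitSat c S σ)
    (huniq : ∀ T ⊆ C, T.card = r → ¬ bitSat c T σ → T = S) :
    bitConflict c C := by
  have hσs : StrictMono (σ ∘ s) := fun j k => hmono j k
  have hs : Function.Injective s := hσs.injective.of_comp
  have hsiC : s i ∈ C := hC ▸ Finset.mem_image_of_mem s (Finset.mem_univ i)
  have hCcard : C.card = r + 1 := by
    rw [hC, Finset.card_image_of_injective _ hs, Finset.card_univ, Fintype.card_fin]
  have hmemS : ∀ j ≠ i, s j ∈ S := fun j hj =>
    hS ▸ Finset.mem_erase.2 ⟨hs.ne hj, hC ▸ Finset.mem_image_of_mem s (Finset.mem_univ j)⟩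
  refine bitConflict_of_unique_unsat hr c hCcard (hC ▸ Brackets.of_strictMono_comp hσs)
    (hS ▸ Finset.erase_subset _ _) ?_ (hmemS 0 hi0.symm) (hmemS _ hilast.symm) hSbad huniq
  rw [hS, Finset.card_erase_of_mem hsiC, hCcard, Nat.add_sub_cancel]
end

section
/- The r-Dense Betweenness problem (r ≥ 4) is 2r-simply characterized: for any ordered instance R_σ and any set C of 2r vertices such that the induced instance on C contains exactly one constraint inconsistent with σ, the set C is a conflict. -/
/-!
Let `S₀` be the only `r`-subset of `C` violated by `σ`, and suppose a ranking `π` satisfies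
every `r`-subset of `C`. Any other `r`-subset `S` is satisfied by `σ`, so its selected vertices
are its `σ`-minimum and `σ`-maximum, and `π` puts the rest of `S` strictly between them.
Since `r ≥ 4` and `#C = 2r`, any three vertices inside a `σ`-interval of `C` with more than `r`
elements extend within it to such an `S`; applied to intervals reaching an end of `C`, this
shows that `π` orders `C` like `σ` or in reverse. Betweenness survives both, so `σ` would
satisfy `S₀` as `π` does.
-/

open Finset

namespace Finset

variable {α : Type*}

lemma exists_subsuperset_card_eq_ne {base P : Finset α} {n : ℕ} (S₀ : Finset α)
    (hbase : base ⊆ P) (hn : #base < n) (hP : n < #P) :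
    ∃ S, base ⊆ S ∧ S ⊆ P ∧ #S = n ∧ S ≠ S₀ := by
  classical
  by_cases hPS₀ : P ⊆ S₀
  · obtain ⟨S, hbS, hSP, hS⟩ := exists_subsuperset_card_eq hbase hn.le hP.le
    refine ⟨S, hbS, hSP, hS, ?_⟩
    rintro rfl
    have := card_le_card hPS₀
    omega
  · obtain ⟨w, hwP, hwS₀⟩ := not_subset.1 hPS₀
    obtain ⟨S, hbS, hSP, hS⟩ := exists_subsuperset_card_eq (insert_subset hwP hbase)
      ((card_insert_le _ _).trans hn) hP.le
    exact ⟨S, (subset_insert _ _).trans hbS, hSP, hS,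
      fun h => hwS₀ (h ▸ hbS (mem_insert_self _ _))⟩

lemma card_add_two_le_card_filter_add_card_filter {s : Finset α} {f : α → ℕ} {x y : α}
    (hx : x ∈ s) (hy : y ∈ s) (hxy : f x < f y) :
    #s + 2 ≤ #(s.filter (f · ≤ f y)) + #(s.filter (f x ≤ f ·)) := by
  classical
  rw [← card_union_add_card_inter, ← filter_or, ← filter_and,
    filter_true_of_mem fun z _ => le_or_gt (f z) (f y) |>.imp_right fun h => (hxy.trans h).le]
  have hpair : {x, y} ⊆ s.filter (fun z => f z ≤ f y ∧ f x ≤ f z) := by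
    intro z hz
    rcases mem_insert.1 hz with rfl | hz
    · simp [hx, hxy.le]
    · rw [mem_singleton.1 hz]; simp [hy, hxy.le]
  have := card_le_card hpair
  rw [card_pair (ne_of_apply_ne f hxy.ne)] at this
  omega

end Finset

def StrictlyBetween {V : Type*} (τ : V → ℕ) (a u b : V) : Prop :=
  τ a < τ u ∧ τ u < τ b ∨ τ b < τ u ∧ τ u < τ a

namespace BITSel

variable {V : Type*} {r : ℕ} (c : BITSel V r) {σ π : V → ℕ}

lemma eq_sel_of_bitSat_of_extreme {S : Finset V} (hS : #S = r)
    (hsat : bitSat c S σ) {v : V} (hv : v ∈ S)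
    (hext : (∀ z ∈ S, σ v ≤ σ z) ∨ (∀ z ∈ S, σ z ≤ σ v)) :
    v = c.sel1 S ∨ v = c.sel2 S := by
  by_contra! h
  have h1 := c.mem1 S hS
  have h2 := c.mem2 S hS
  have := hsat v hv h.1 h.2
  rcases hext with hext | hext
  · have := hext _ h1; have := hext _ h2; omega
  · have := hext _ h1; have := hext _ h2; omega

lemma strictlyBetween_of_bitSat {S : Finset V} (hS : #S = r)
    (hσ : Set.InjOn σ S) (hσS : bitSat c S σ) (hπS : bitSat c S π) {a u b : V}
    (ha : a ∈ S) (hu : u ∈ S) (hb : b ∈ S)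
    (hmin : ∀ z ∈ S, σ a ≤ σ z) (hmax : ∀ z ∈ S, σ z ≤ σ b) (hua : u ≠ a) (hub : u ≠ b) :
    StrictlyBetween π a u b := by
  have hab : a ≠ b := by
    rintro rfl
    exact hua (hσ hu ha (le_antisymm (hmax u hu) (hmin u hu)))
  have hne := c.ne S hS
  rcases c.eq_sel_of_bitSat_of_extreme hS hσS ha (.inl hmin) with rfl | rfl <;>
  rcases c.eq_sel_of_bitSat_of_extreme hS hσS hb (.inr hmax) with rfl | rfl
  · exact absurd rfl hab
  · exact hπS u hu hua hub
  · exact (hπS u hu hub hua).symm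
  · exact absurd rfl hab

/- `o` says whether `π` preserves or reverses the `σ`-order on `S`. -/
lemma bitSat_of_lt_iff {S : Finset V} (hS : #S = r) (hσ : Set.InjOn σ S) {o : Prop}
    (horient : ∀ x ∈ S, ∀ y ∈ S, σ x < σ y → (π x < π y ↔ o)) (hπS : bitSat c S π) :
    bitSat c S σ := by
  intro u hu h1 h2
  have h1S := c.mem1 S hS
  have h2S := c.mem2 S hS
  have hbtw := hπS u hu h1 h2
  have hne1 : σ (c.sel1 S) ≠ σ u := fun h => h1 (hσ hu h1S h.symm)
  have hne2 : σ u ≠ σ (c.sel2 S) := fun h => h2 (hσ hu h2S h)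
  rcases hne1.lt_or_gt with hlt1 | hlt1 <;> rcases hne2.lt_or_gt with hlt2 | hlt2
  all_goals
    have ho1 := horient _ (by assumption) _ (by assumption) hlt1
    have ho2 := horient _ (by assumption) _ (by assumption) hlt2
    by_cases ho : o <;> simp only [ho, iff_true, iff_false, not_lt] at ho1 ho2 <;> omega

variable {C S₀ : Finset V}

lemma strictlyBetween_of_lt_card (hr : 4 ≤ r) (hσ : Set.InjOn σ C)
    (hσsat : ∀ S ⊆ C, #S = r → S ≠ S₀ → bitSat c S σ)
    (hπsat : ∀ S ⊆ C, #S = r → bitSat c S π)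
    {P : Finset V} (hPC : P ⊆ C) (hP : r < #P) {a u b : V}
    (ha : a ∈ P) (hu : u ∈ P) (hb : b ∈ P)
    (hmin : ∀ z ∈ P, σ a ≤ σ z) (hmax : ∀ z ∈ P, σ z ≤ σ b) (hua : u ≠ a) (hub : u ≠ b) :
    StrictlyBetween π a u b := by
  classical
  obtain ⟨S, hbase, hSP, hS, hSS₀⟩ := exists_subsuperset_card_eq_ne S₀
    (insert_subset ha (insert_subset hu (singleton_subset_iff.2 hb)))
    (card_le_three.trans_lt (by omega)) hP
  have hSC := hSP.trans hPC
  obtain ⟨haS, huS, hbS⟩ : a ∈ S ∧ u ∈ S ∧ b ∈ S := by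
    simpa only [insert_subset_iff, singleton_subset_iff] using hbase
  exact c.strictlyBetween_of_bitSat hS (hσ.mono hSC) (hσsat S hSC hS hSS₀) (hπsat S hSC hS)
    haS huS hbS (fun z hz => hmin z (hSP hz)) (fun z hz => hmax z (hSP hz))
    hua hub

/- Every vertex of `C` lies `π`-between the `σ`-extremes `m` and `M`. For `σ x < σ y`, one of
`{z | σ z ≤ σ y}` and `{z | σ x ≤ σ z}` has more than `r` elements, so `x` lies `π`-between
`m` and `y`, or `y` lies `π`-between `x` and `M`. -/
lemma lt_iff_lt_of_bitSat (hr : 4 ≤ r) (hC : #C = 2 * r) (hσ : Set.InjOn σ C)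
    (hσsat : ∀ S ⊆ C, #S = r → S ≠ S₀ → bitSat c S σ)
    (hπsat : ∀ S ⊆ C, #S = r → bitSat c S π)
    {m M : V} (hm : m ∈ C) (hM : M ∈ C)
    (hmin : ∀ z ∈ C, σ m ≤ σ z) (hmax : ∀ z ∈ C, σ z ≤ σ M)
    {x y : V} (hx : x ∈ C) (hy : y ∈ C) (hxy : σ x < σ y) :
    π x < π y ↔ π m < π M := by
  have hull : ∀ z ∈ C, z ≠ m → z ≠ M → StrictlyBetween π m z M := fun z hz hzm hzM =>
    c.strictlyBetween_of_lt_card hr hσ hσsat hπsat subset_rfl (by omega) hm hz hM hmin hmax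
      hzm hzM
  have hyx : y ≠ x := ne_of_apply_ne σ hxy.ne'
  rcases eq_or_ne x m with rfl | hxm
  · rcases eq_or_ne y M with rfl | hyM
    · rfl
    · have := hull y hy hyx hyM
      unfold StrictlyBetween at this; omega
  rcases eq_or_ne y M with rfl | hyM
  · have := hull x hx hxm hyx.symm
    unfold StrictlyBetween at this; omega
  have hxb := hull x hx hxm (ne_of_apply_ne σ (hxy.trans_le (hmax y hy)).ne)
  have hyb := hull y hy (ne_of_apply_ne σ ((hmin x hx).trans_lt hxy).ne') hyM
  unfold StrictlyBetween at hxb hyb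
  have hP : r < #(C.filter (σ · ≤ σ y)) ∨ r < #(C.filter (σ x ≤ σ ·)) := by
    have := card_add_two_le_card_filter_add_card_filter hx hy hxy
    omega
  rcases hP with hP | hP
  · have := c.strictlyBetween_of_lt_card hr hσ hσsat hπsat (filter_subset _ _) hP
      (mem_filter.2 ⟨hm, (hmin x hx).trans hxy.le⟩) (mem_filter.2 ⟨hx, hxy.le⟩)
      (mem_filter.2 ⟨hy, le_rfl⟩) (fun z hz => hmin z (mem_filter.1 hz).1)
      (fun z hz => (mem_filter.1 hz).2) hxm hyx.symm
    unfold StrictlyBetween at this; omega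
  · have := c.strictlyBetween_of_lt_card hr hσ hσsat hπsat (filter_subset _ _) hP
      (mem_filter.2 ⟨hx, le_rfl⟩) (mem_filter.2 ⟨hy, hxy.le⟩)
      (mem_filter.2 ⟨hM, hxy.le.trans (hmax y hy)⟩) (fun z hz => (mem_filter.1 hz).2)
      (fun z hz => hmax z (mem_filter.1 hz).1) hyx hyM
    unfold StrictlyBetween at this; omega

end BITSel

theorem bit_2r_simply_characterized_general
    {V : Type*} {r : ℕ} (hr : 4 ≤ r)
    (c : BITSel V r)
    (σ : V → ℕ) (hσ : Function.Injective σ)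
    (C : Finset V) (hC : C.card = 2 * r)
    (huniq : ∃! S : Finset V, S ⊆ C ∧ S.card = r ∧ ¬ bitSat c S σ) :
    bitConflict c C := by
  obtain ⟨S₀, ⟨hS₀C, hS₀, hS₀bad⟩, hS₀uniq⟩ := huniq
  rintro ⟨π, -, hπsat⟩
  have hσsat : ∀ S ⊆ C, #S = r → S ≠ S₀ → bitSat c S σ := fun S hSC hS hSS₀ =>
    by_contra fun h => hSS₀ (hS₀uniq S ⟨hSC, hS, h⟩)
  have hCne : C.Nonempty := card_pos.1 (by omega)
  obtain ⟨m, hm, hmin⟩ := C.exists_min_image σ hCne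
  obtain ⟨M, hM, hmax⟩ := C.exists_max_image σ hCne
  exact hS₀bad <| c.bitSat_of_lt_iff hS₀ hσ.injOn
    (fun x hx y hy hxy => c.lt_iff_lt_of_bitSat hr hC hσ.injOn hσsat hπsat hm hM hmin hmax
      (hS₀C hx) (hS₀C hy) hxy)
    (hπsat S₀ hS₀C hS₀)

/-- `r`-Dense Betweenness (`r ≥ 4`) is `2r`-simply characterized: for any ordered
instance and any set `C` of `2r` vertices inducing exactly one constraint inconsistent
with the ranking `σ`, the set `C` is a conflict. -/
theorem bit_2r_simply_characterized
    {V : Type*} [DecidableEq V] {r : ℕ} (hr : 4 ≤ r)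
    (c : BITSel V r)
    (σ : V → ℕ) (hσ : Function.Injective σ)
    (C : Finset V) (hC : C.card = 2 * r)
    (huniq : ∃! S : Finset V, S ⊆ C ∧ S.card = r ∧ ¬ bitSat c S σ) :
    bitConflict c C :=
  bit_2r_simply_characterized_general hr c σ hσ C hC huniq
end

section
/- In r-Dense Feedback Arc Set, removing a vertex v that is the selected vertex of every constraint containing it, together with all constraints containing v, is a safe reduction: the original instance has an edition of size at most k if and only if the reduced instance does. -/
/-- The `r`-FAST instance induced on the vertex set `W` has an edition of size at most
`k`: one can change the selected vertices of at most `k` constraints of `W` so that some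
ranking of `W` satisfies all constraints induced by `W`. -/
def fastEditionLe {V : Type*} [DecidableEq V] (r : ℕ) (sel : Finset V → V)
    (W : Finset V) (k : ℕ) : Prop :=
  ∃ F : Finset (Finset V), F.card ≤ k ∧ (∀ S ∈ F, S ⊆ W ∧ S.card = r) ∧
    ∃ sel' : Finset V → V, (∀ S : Finset V, S ∉ F → sel' S = sel S) ∧
      (∀ S ⊆ W, S.card = r → sel' S ∈ S) ∧
      ∃ σ : V → ℕ, Set.InjOn σ ↑W ∧ ∀ S ⊆ W, S.card = r → fastSat sel' S σ

/-!
Editions transfer both ways. Restricting an edition of the whole instance to the constraints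
avoiding `v` gives an edition of the reduced instance. Conversely, a ranking of the reduced
instance extended by placing `v` last satisfies every constraint through `v` without editing
it, since `v` is selected there, so the same edited set works for the whole instance.
-/

open Finset

section

variable {V : Type*} [DecidableEq V] {r : ℕ} {sel : Finset V → V}

theorem fastEditionLe.mono {W W' : Finset V} {k : ℕ} (hW : W' ⊆ W)
    (h : fastEditionLe r sel W k) : fastEditionLe r sel W' k := by
  obtain ⟨F, hFk, hFW, sel', hsel'F, hsel'mem, σ, hσ, hsat⟩ := h
  refine ⟨F.filter (· ⊆ W'), (card_filter_le _ _).trans hFk, fun S hS => ?_,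
    fun S => if S ⊆ W' then sel' S else sel S, fun S hS => ?_, fun S hS hSr => ?_,
    σ, hσ.mono (coe_subset.2 hW), fun S hS hSr => ?_⟩
  · rw [mem_filter] at hS
    exact ⟨hS.2, (hFW S hS.1).2⟩
  · dsimp only
    split_ifs with hSW
    · exact hsel'F S fun hSF => hS (mem_filter.2 ⟨hSF, hSW⟩)
    · rfl
  · dsimp only
    rw [if_pos hS]
    exact hsel'mem S (hS.trans hW) hSr
  · unfold fastSat
    simp only [if_pos hS]
    exact hsat S (hS.trans hW) hSr

theorem exists_injOn_insert_extension_max {W : Finset V} {σ : V → ℕ} (hσ : Set.InjOn σ W)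
    {v : V} (hv : v ∉ W) :
    ∃ τ : V → ℕ, Set.InjOn τ ↑(insert v W) ∧ (∀ u ∈ W, τ u = σ u) ∧ ∀ u ∈ W, τ u < τ v := by
  set τ := Function.update σ v (W.sup σ + 1)
  have hτσ : ∀ u ∈ W, τ u = σ u := fun u hu =>
    Function.update_of_ne (ne_of_mem_of_not_mem hu hv) _ _
  have hτv : ∀ u ∈ W, τ u < τ v := fun u hu => by
    rw [hτσ u hu, show τ v = W.sup σ + 1 from Function.update_self ..]
    exact Nat.lt_succ_of_le (le_sup hu)
  refine ⟨τ, ?_, hτσ, hτv⟩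
  rw [coe_insert, Set.injOn_insert (mem_coe.not.2 hv)]
  refine ⟨fun x hx y hy hxy => hσ hx hy ?_, ?_⟩
  · rwa [← hτσ x hx, ← hτσ y hy]
  · rintro ⟨u, hu, hτu⟩
    exact (hτv u hu).ne hτu

theorem fastEditionLe.insert_of_sel_eq {W : Finset V} {v : V} {k : ℕ} (hvW : v ∉ W)
    (hv : ∀ S ⊆ insert v W, S.card = r → v ∈ S → sel S = v)
    (h : fastEditionLe r sel W k) : fastEditionLe r sel (insert v W) k := by
  obtain ⟨F, hFk, hFW, sel', hsel'F, hsel'mem, σ, hσ, hsat⟩ := h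
  obtain ⟨τ, hτ, hτσ, hτv⟩ := exists_injOn_insert_extension_max hσ hvW
  have hsel'v : ∀ S ⊆ insert v W, S.card = r → v ∈ S → sel' S = v := fun S hS hSr hvS =>
    (hsel'F S fun hSF => hvW ((hFW S hSF).1 hvS)).trans (hv S hS hSr hvS)
  have hsub : ∀ S ⊆ insert v W, v ∉ S → S ⊆ W := fun S hS hvS =>
    (subset_insert_iff_of_notMem hvS).1 hS
  refine ⟨F, hFk, fun S hS => ⟨(hFW S hS).1.trans (subset_insert _ _), (hFW S hS).2⟩,
    sel', hsel'F, fun S hS hSr => ?_, τ, hτ, fun S hS hSr => ?_⟩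
  · by_cases hvS : v ∈ S
    · rwa [hsel'v S hS hSr hvS]
    · exact hsel'mem S (hsub S hS hvS) hSr
  · intro u hu hne
    by_cases hvS : v ∈ S
    · rw [hsel'v S hS hSr hvS] at hne ⊢
      exact hτv u (mem_of_mem_insert_of_ne (hS hu) hne)
    · have hSW := hsub S hS hvS
      rw [hτσ u (hSW hu), hτσ _ (hSW (hsel'mem S hSW hSr))]
      exact hsat S hSW hSr u hu hne

end

theorem fast_remove_always_selected_vertex_general
    {V : Type*} [Fintype V] [DecidableEq V] {r : ℕ}
    (sel : Finset V → V)
    (v : V) (hv : ∀ S : Finset V, S.card = r → v ∈ S → sel S = v)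
    (k : ℕ) :
    fastEditionLe r sel (Finset.univ : Finset V) k ↔
      fastEditionLe r sel (Finset.univ.erase v) k := by
  refine ⟨fun h => h.mono (erase_subset v univ), fun h => ?_⟩
  have h' := h.insert_of_sel_eq (notMem_erase v univ) fun S _ => hv S
  rwa [insert_erase (mem_univ v)] at h'

/-- Removing a vertex `v` that is the selected vertex of every constraint containing it
(together with all constraints containing `v`) is a safe reduction: the original instance
has an edition of size at most `k` iff the reduced one does. -/
theorem fast_remove_always_selected_vertex
    {V : Type*} [Fintype V] [DecidableEq V] {r : ℕ} (hr : 2 ≤ r)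
    (sel : Finset V → V) (hsel : ∀ S : Finset V, S.card = r → sel S ∈ S)
    (v : V) (hv : ∀ S : Finset V, S.card = r → v ∈ S → sel S = v)
    (k : ℕ) :
    fastEditionLe r sel (Finset.univ : Finset V) k ↔
      fastEditionLe r sel (Finset.univ.erase v) k :=
  fast_remove_always_selected_vertex_general sel v hv k
end

section
/- Let R_σ be an ordered instance of r-Dense Feedback Arc Set with at most p ≥ 1 inconsistent constraints, and let S be an inconsistent constraint with |span⁻(S)| > p + k + r. Then S is the center of a simple sunflower {C₁, …, C_m} with m > k; i.e., there are more than k vertices v ∈ span⁻(S) \ S such that S ∪ {v} induces exactly one inconsistent constraint (namely S), and each such S ∪ {v} is a conflict. -/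
/-!
A vertex `v ∈ span⁻(S) \ S` for which `S ∪ {v}` contains a second inconsistent constraint `T`
is recovered from `T` as the only vertex of `T` outside `S`; hence at most `p` vertices of
`span⁻(S) \ S` are spoiled this way and more than `k` remain.

For a remaining `v`, let `m` be the `σ`-maximum of `S ∪ {v}`, which lies in `S` and is not
`sel S` since `S` is inconsistent. Every other `r`-subset of `S ∪ {v}` is consistent, so those
containing `m` select `m`. A ranking `τ` satisfying all of them cannot put `m` last (that
violates `S`), nor any other `w` (take the `r`-subset avoiding a fourth vertex `x ∉ {v, m, w}`,
which exists as `r + 1 ≥ 4`: it selects `m` but contains `w`).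
-/

open Finset

section Ranking

variable {V : Type*} {sel : Finset V → V} {T : Finset V} {σ : V → ℕ}

theorem fastSat.le_sel (h : fastSat sel T σ) {u : V} (hu : u ∈ T) : σ u ≤ σ (sel T) := by
  rcases eq_or_ne u (sel T) with rfl | hne
  · exact le_rfl
  · exact (h u hu hne).le

theorem fastSat_iff_forall_le (hσ : Function.Injective σ) :
    fastSat sel T σ ↔ ∀ u ∈ T, σ u ≤ σ (sel T) :=
  ⟨fun h _ hu => h.le_sel hu, fun h u hu hne => (h u hu).lt_of_ne (hσ.ne hne)⟩

end Ranking

section SpanBelow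

variable {V : Type*} [Fintype V]

/-- The paper's `span⁻(S)`. -/
def spanBelow (σ : V → ℕ) (S : Finset V) : Finset V := {v | ∃ u ∈ S, σ v ≤ σ u}

theorem coe_spanBelow (σ : V → ℕ) (S : Finset V) :
    (spanBelow σ S : Set V) = {v | ∃ u ∈ S, σ v ≤ σ u} := by
  ext; simp [spanBelow]

end SpanBelow

section Sunflower

variable {V : Type*} [DecidableEq V]

theorem fastConflict_insert_of_unique_inconsistent {r : ℕ} (hr : 3 ≤ r) {sel : Finset V → V}
    (hsel : ∀ T : Finset V, T.card = r → sel T ∈ T) {σ : V → ℕ} (hσ : Function.Injective σ)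
    {S : Finset V} (hS : S.card = r) (hSbad : ¬ fastSat sel S σ) {v : V} (hv : v ∉ S)
    (hvspan : ∃ u ∈ S, σ v ≤ σ u)
    (hunique : ∀ T ⊆ insert v S, T.card = r → ¬ fastSat sel T σ → T = S) :
    fastConflict r sel (insert v S) := by
  rintro ⟨τ, -, hτ⟩
  set C := insert v S
  have hCcard : C.card = r + 1 := by rw [card_insert_of_notMem hv, hS]
  obtain ⟨m, hmS, hm⟩ := S.exists_max_image σ (card_pos.mp (by omega))
  have hmC : ∀ y ∈ C, σ y ≤ σ m := by
    obtain ⟨u, hu, hvu⟩ := hvspan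
    simpa only [C, forall_mem_insert] using ⟨hvu.trans (hm u hu), hm⟩
  have hselS : sel S ≠ m := fun h => hSbad ((fastSat_iff_forall_le hσ).2 (h ▸ hm))
  have hcard_erase : ∀ x ∈ C, (C.erase x).card = r := fun x hx => by
    rw [card_erase_of_mem hx, hCcard, Nat.add_sub_cancel]
  have hsel_erase : ∀ x ∈ C, x ≠ v → x ≠ m → sel (C.erase x) = m := by
    intro x hx hxv hxm
    have hne : C.erase x ≠ S := fun h => hv (h ▸ mem_erase.2 ⟨hxv.symm, mem_insert_self v S⟩)
    have hsat : fastSat sel (C.erase x) σ :=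
      by_contra fun hbad => hne (hunique _ (erase_subset x C) (hcard_erase x hx) hbad)
    exact hσ <| le_antisymm (hmC _ (erase_subset x C (hsel _ (hcard_erase x hx))))
      (hsat.le_sel (mem_erase.2 ⟨hxm.symm, mem_insert_of_mem hmS⟩))
  obtain ⟨w, hwC, hw⟩ := C.exists_max_image τ ⟨v, mem_insert_self v S⟩
  rcases eq_or_ne w m with rfl | hwm
  · have hlt := hτ S (subset_insert v S) hS w hmS hselS.symm
    exact (hlt.trans_le (hw _ (mem_insert_of_mem (hsel S hS)))).false
  · obtain ⟨x, hxC, hx⟩ := exists_mem_notMem_of_card_lt_card (s := {v, m, w}) (t := C)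
      (by rw [hCcard]; exact card_le_three.trans_lt (by omega))
    simp only [mem_insert, mem_singleton, not_or] at hx
    obtain ⟨hxv, hxm, hxw⟩ := hx
    have hlt := hτ _ (erase_subset x C) (hcard_erase x hxC) w (mem_erase.2 ⟨Ne.symm hxw, hwC⟩)
      (by rwa [hsel_erase x hxC hxv hxm])
    rw [hsel_erase x hxC hxv hxm] at hlt
    exact (hlt.trans_le (hw m (mem_insert_of_mem hmS))).false

theorem card_le_card_erase_of_forall_subset_insert {I : Finset (Finset V)} {S B : Finset V}
    (hB : ∀ v ∈ B, v ∉ S ∧ ∃ T ∈ I, T ≠ S ∧ T.card = S.card ∧ T ⊆ insert v S) :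
    B.card ≤ (I.erase S).card := by
  refine card_le_card_of_forall_subsingleton (fun v T => v ∈ T ∧ T ⊆ insert v S)
    (fun v hv => ?_) (fun T _ => ?_)
  · obtain ⟨-, T, hTI, hTS, hcard, hsub⟩ := hB v hv
    refine ⟨T, mem_erase.2 ⟨hTS, hTI⟩, by_contra fun hvT => hTS ?_, hsub⟩
    refine eq_of_subset_of_card_le (fun y hy => ?_) hcard.ge
    exact (mem_insert.1 (hsub hy)).resolve_left (by rintro rfl; exact hvT hy)
  · rintro v₁ ⟨hv₁, hv₁T, -⟩ v₂ ⟨-, -, hT₂⟩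
    exact (mem_insert.1 (hT₂ hv₁T)).resolve_right (hB v₁ hv₁).1

variable [Fintype V]

open Classical in
noncomputable def petals (r : ℕ) (sel : Finset V → V) (σ : V → ℕ) (S : Finset V) : Finset V :=
  {v ∈ spanBelow σ S \ S | ∀ T ⊆ insert v S, T.card = r → ¬ fastSat sel T σ → T = S}

theorem mem_petals {r : ℕ} {sel : Finset V → V} {σ : V → ℕ} {S : Finset V} {v : V} :
    v ∈ petals r sel σ S ↔ ((∃ u ∈ S, σ v ≤ σ u) ∧ v ∉ S) ∧
      ∀ T ⊆ insert v S, T.card = r → ¬ fastSat sel T σ → T = S := by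
  simp [petals, spanBelow]

theorem card_spanBelow_le {r : ℕ} (sel : Finset V → V) (σ : V → ℕ) {S : Finset V}
    (hS : S.card = r) :
    (spanBelow σ S).card ≤
      (petals r sel σ S).card + r + {T : Finset V | T.card = r ∧ ¬ fastSat sel T σ}.ncard := by
  classical
  set I := (Set.toFinite {T : Finset V | T.card = r ∧ ¬ fastSat sel T σ}).toFinset
  set spoiled := (spanBelow σ S \ S).filter
    fun v => ¬ ∀ T ⊆ insert v S, T.card = r → ¬ fastSat sel T σ → T = S
  have hspoiled : spoiled.card ≤ (I.erase S).card := by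
    refine card_le_card_erase_of_forall_subset_insert fun v hv => ?_
    obtain ⟨hvS, hv⟩ := mem_filter.1 hv
    push Not at hv
    obtain ⟨T, hsub, hcard, hbad, hTS⟩ := hv
    exact ⟨(mem_sdiff.1 hvS).2, T, by simpa [I] using ⟨hcard, hbad⟩, hTS, hcard.trans hS.symm,
      hsub⟩
  calc (spanBelow σ S).card ≤ (spanBelow σ S \ S).card + S.card := card_le_card_sdiff_add_card
    _ = (petals r sel σ S).card + spoiled.card + r := by
      rw [petals, card_filter_add_card_filter_not, hS]
    _ ≤ (petals r sel σ S).card + r + I.card := by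
      have := card_erase_le (s := I) (a := S)
      omega
    _ = _ := by rw [Set.ncard_eq_toFinset_card]

end Sunflower

theorem fast_simple_sunflower_exists_general
    {V : Type*} [Fintype V] [DecidableEq V] {r k p : ℕ} (hr : 3 ≤ r)
    (sel : Finset V → V) (hsel : ∀ S : Finset V, S.card = r → sel S ∈ S)
    (σ : V → ℕ) (hσ : Function.Injective σ)
    (hple : {S : Finset V | S.card = r ∧ ¬ fastSat sel S σ}.ncard ≤ p)
    (S : Finset V) (hS : S.card = r) (hSbad : ¬ fastSat sel S σ)
    (hspan : p + k + r < {v : V | ∃ u ∈ S, σ v ≤ σ u}.ncard) :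
    ∃ T : Finset V, k < T.card ∧
      (∀ v ∈ T, v ∉ S ∧ ∃ u ∈ S, σ v ≤ σ u) ∧
      (∀ v ∈ T, ∃! T' : Finset V, T' ⊆ insert v S ∧ T'.card = r ∧ ¬ fastSat sel T' σ) ∧
      (∀ v ∈ T, fastConflict r sel (insert v S)) := by
  have hcard := card_spanBelow_le sel σ hS
  rw [← coe_spanBelow, Set.ncard_coe_finset] at hspan
  refine ⟨petals r sel σ S, by omega, fun v hv => ?_, fun v hv => ?_, fun v hv => ?_⟩ <;>
    obtain ⟨⟨hvspan, hvS⟩, hunique⟩ := mem_petals.1 hv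
  · exact ⟨hvS, hvspan⟩
  · exact ⟨S, ⟨subset_insert v S, hS, hSbad⟩, fun T ⟨hT, hTr, hTbad⟩ => hunique T hT hTr hTbad⟩
  · exact fastConflict_insert_of_unique_inconsistent hr hsel hσ hS hSbad hvS hvspan hunique

/-- If an ordered `r`-FAST instance has at most `p ≥ 1` inconsistent constraints and `S`
is an inconsistent constraint with `|span⁻(S)| > p + k + r` (where `span⁻(S)` consists of
the vertices not after the `σ`-maximum of `S`), then `S` is the center of a simple
sunflower of size `> k`: there are more than `k` vertices `v ∈ span⁻(S) \ S` such that
`S ∪ {v}` induces exactly one inconsistent constraint (namely `S`), and each such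
`S ∪ {v}` is a conflict. -/
theorem fast_simple_sunflower_exists
    {V : Type*} [Fintype V] [DecidableEq V] {r k p : ℕ} (hr : 3 ≤ r)
    (sel : Finset V → V) (hsel : ∀ S : Finset V, S.card = r → sel S ∈ S)
    (σ : V → ℕ) (hσ : Function.Injective σ)
    (hp1 : 1 ≤ p)
    (hple : {S : Finset V | S.card = r ∧ ¬ fastSat sel S σ}.ncard ≤ p)
    (S : Finset V) (hS : S.card = r) (hSbad : ¬ fastSat sel S σ)
    (hspan : p + k + r < {v : V | ∃ u ∈ S, σ v ≤ σ u}.ncard) :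
    ∃ T : Finset V, k < T.card ∧
      (∀ v ∈ T, v ∉ S ∧ ∃ u ∈ S, σ v ≤ σ u) ∧
      (∀ v ∈ T, ∃! T' : Finset V, T' ⊆ insert v S ∧ T'.card = r ∧ ¬ fastSat sel T' σ) ∧
      (∀ v ∈ T, fastConflict r sel (insert v S)) :=
  fast_simple_sunflower_exists_general hr sel hsel σ hσ hple S hS hSbad hspan
end
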